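/- arXiv:1911.13054 — 2 statements merged into one kernel-verified Lean document; each statement's English description precedes it below -/
import Mathlib

section
/- Let L, L' be sets of finite words over Σ. If lcs(L) is not a suffix of lcs(L') and lcs(L') is not a suffix of lcs(L), then lcs(L ∪ L') = lcs(lcs(L), lcs(L')) and moreover lcs(L ∪ L') is a proper suffix of both lcs(L) and lcs(L'); in this case the maximal suffix extension of L ∪ L' is empty: for every word u, lcs(u·(L ∪ L')) = lcs(L ∪ L'). -/
/-!
A word of `u · (L ∪ L')` ends in `R` or in `R'`, and both kinds occur. A common suffix `s` of
all of them is comparable with `R` (both are suffixes of one word ending in `R`); were `R <:+ s`,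
then `R` would also be a suffix of a word ending in `R'`, making `R` and `R'` comparable. Hence
`s <:+ R`, likewise `s <:+ R'`, so `s <:+ lcs R R'`. Prepending `u` does not affect this argument.
-/

variable {α : Type*} [DecidableEq α]

/-- Longest common prefix of two finite words. -/
def lcp : List α → List α → List α
  | a :: u, b :: v => if a = b then a :: lcp u v else []
  | _, _ => []

/-- Longest common suffix of two finite words. -/
def lcs (u v : List α) : List α := (lcp u.reverse v.reverse).reverse

/-- `wpow x k` is the `k`-fold concatenation `x^k`. -/
def wpow (x : List α) (k : ℕ) : List α := (List.replicate k x).flatten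


/-- `R` is the longest common suffix of the language `L`. -/
def IsLCS (L : Set (List α)) (R : List α) : Prop :=
  (∀ w ∈ L, R <:+ w) ∧ ∀ s : List α, (∀ w ∈ L, s <:+ w) → s <:+ R

theorem lcp_prefix_left : ∀ u v : List α, lcp u v <+: u
  | a :: u, b :: v => by
    unfold lcp
    split_ifs
    · exact (List.prefix_cons_inj a).mpr (lcp_prefix_left u v)
    · exact List.nil_prefix
  | [], _ | _ :: _, [] => List.nil_prefix

theorem lcp_prefix_right : ∀ u v : List α, lcp u v <+: v
  | a :: u, b :: v => by
    unfold lcp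
    split_ifs with hab
    · exact List.cons_prefix_cons.mpr ⟨hab, lcp_prefix_right u v⟩
    · exact List.nil_prefix
  | [], _ | _ :: _, [] => List.nil_prefix

theorem prefix_lcp {s : List α} : ∀ {u v : List α}, s <+: u → s <+: v → s <+: lcp u v := by
  induction s with
  | nil => exact fun _ _ => List.nil_prefix
  | cons c s ih =>
    rintro (_ | ⟨a, u⟩) (_ | ⟨b, v⟩) hu hv
    case cons.cons =>
      obtain ⟨rfl, hsu⟩ := List.cons_prefix_cons.mp hu
      obtain ⟨rfl, hsv⟩ := List.cons_prefix_cons.mp hv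
      simpa [lcp] using ih hsu hsv
    all_goals simp_all

theorem lcs_suffix_left (u v : List α) : lcs u v <:+ u := by
  simpa [lcs] using List.reverse_suffix.mpr (lcp_prefix_left u.reverse v.reverse)

theorem lcs_suffix_right (u v : List α) : lcs u v <:+ v := by
  simpa [lcs] using List.reverse_suffix.mpr (lcp_prefix_right u.reverse v.reverse)

theorem suffix_lcs {u v s : List α} (hu : s <:+ u) (hv : s <:+ v) : s <:+ lcs u v := by
  rw [← List.reverse_prefix, lcs, List.reverse_reverse]
  exact prefix_lcp (List.reverse_prefix.mpr hu) (List.reverse_prefix.mpr hv)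

theorem lcs_ne_left_of_not_suffix {u v : List α} (h : ¬ u <:+ v) : lcs u v ≠ u :=
  fun he => h (he ▸ lcs_suffix_right u v)

theorem lcs_ne_right_of_not_suffix {u v : List α} (h : ¬ v <:+ u) : lcs u v ≠ v :=
  fun he => h (he ▸ lcs_suffix_left u v)

theorem IsLCS.nonempty {β : Type*} {L : Set (List β)} {R s : List β} (hR : IsLCS L R)
    (hs : ¬ s <:+ R) : L.Nonempty :=
  Set.nonempty_iff_ne_empty.mpr fun hL => hs (hR.2 s (by simp [hL]))

theorem IsLCS.suffix_append {β : Type*} {L : Set (List β)} {R v : List β} (hR : IsLCS L R)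
    (hv : v ∈ L) (u : List β) : R <:+ u ++ v :=
  (hR.1 v hv).trans (List.suffix_append u v)

theorem suffix_of_incomparable {β : Type*} {R R' x y s : List β} (h1 : ¬ R <:+ R')
    (h2 : ¬ R' <:+ R) (hx : R <:+ x) (hy : R' <:+ y) (hsx : s <:+ x) (hsy : s <:+ y) :
    s <:+ R := by
  refine (List.suffix_or_suffix_of_suffix hsx hx).resolve_right fun hRs => ?_
  rcases List.suffix_or_suffix_of_suffix (hRs.trans hsy) hy with h | h
  exacts [h1 h, h2 h]

theorem isLCS_lcs_of_incomparable {M : Set (List α)} {R R' x y : List α}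
    (h1 : ¬ R <:+ R') (h2 : ¬ R' <:+ R) (hM : ∀ w ∈ M, R <:+ w ∨ R' <:+ w)
    (hxM : x ∈ M) (hx : R <:+ x) (hyM : y ∈ M) (hy : R' <:+ y) :
    IsLCS M (lcs R R') := by
  refine ⟨fun w hw => ?_, fun s hs => ?_⟩
  · rcases hM w hw with h | h
    exacts [(lcs_suffix_left R R').trans h, (lcs_suffix_right R R').trans h]
  · exact suffix_lcs (suffix_of_incomparable h1 h2 hx hy (hs x hxM) (hs y hyM))
      (suffix_of_incomparable h2 h1 hy hx (hs y hyM) (hs x hxM))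

theorem isLCS_prepend_union_of_incomparable {L L' : Set (List α)} {R R' : List α}
    (hR : IsLCS L R) (hR' : IsLCS L' R') (h1 : ¬ R <:+ R') (h2 : ¬ R' <:+ R) (u : List α) :
    IsLCS {w | ∃ v ∈ L ∪ L', w = u ++ v} (lcs R R') := by
  obtain ⟨x, hx⟩ := hR.nonempty h2
  obtain ⟨y, hy⟩ := hR'.nonempty h1
  refine isLCS_lcs_of_incomparable h1 h2 ?_ ⟨x, .inl hx, rfl⟩ (hR.suffix_append hx u)
    ⟨y, .inr hy, rfl⟩ (hR'.suffix_append hy u)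
  rintro _ ⟨v, hv | hv, rfl⟩
  exacts [.inl (hR.suffix_append hv u), .inr (hR'.suffix_append hv u)]

theorem lcs_union_incomparable (L L' : Set (List α)) (R R' : List α)
    (hR : IsLCS L R) (hR' : IsLCS L' R')
    (h1 : ¬ R <:+ R') (h2 : ¬ R' <:+ R) :
    IsLCS (L ∪ L') (lcs R R') ∧
    (lcs R R' <:+ R ∧ lcs R R' ≠ R) ∧
    (lcs R R' <:+ R' ∧ lcs R R' ≠ R') ∧
    ∀ u : List α, IsLCS {w | ∃ v ∈ L ∪ L', w = u ++ v} (lcs R R') := by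
  have hprepend := isLCS_prepend_union_of_incomparable hR hR' h1 h2
  refine ⟨?_, ⟨lcs_suffix_left R R', lcs_ne_left_of_not_suffix h1⟩,
    ⟨lcs_suffix_right R R', lcs_ne_right_of_not_suffix h2⟩, hprepend⟩
  simpa only [List.nil_append, exists_eq_right', Set.ofPred_mem_eq] using hprepend []
end

section
/- Let L = { u s^k w t^k : k ≥ 0 } for finite words u, s, w, t over Σ with st ≠ ts. Then lcs(L) = lcs(uw, u s w t, u s s w t t), i.e., the longest common suffix of the whole infinite family is already attained by the three words with k = 0, 1, 2. -/
/-!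
Reversing all words turns suffixes into prefixes: it suffices that every common prefix of
`Y k = T^k W S^k U` for `k = 0, 1, 2` is a prefix of every `Y k`. The length `d` of the longest
common prefix is an ultrametric closeness. Since `lcp (S^i U) (S^j U) = S^i lcp U (S U)` for all
`i < j`, for every word `Ω` no term of the sequence `d (W S^k U) Ω` is smaller than two earlier
ones. Against a long power `Ω = T^N` we have `d (Y k) Ω = k |T| + d (W S^k U) Ω`, while a `Y k`
closer to `Y 0` than `Y 1` and `Y 2` are forces either `d (Y 0) Ω = d (Y 1) Ω = d (Y 2) Ω` or
`d (Y k) Ω` below both `d (Y 1) Ω` and `d (Y 2) Ω`; for `T ≠ []` both contradict the previous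
property. For `T = []` the property applies directly with `Ω = Y 0`.
-/

variable {α : Type*} [DecidableEq α]

open List

@[simp] theorem lcp_nil_left (y : List α) : lcp [] y = [] := by cases y <;> rfl

@[simp] theorem lcp_nil_right (x : List α) : lcp x [] = [] := by cases x <;> rfl

theorem lcp_cons_cons (a b : α) (u v : List α) :
    lcp (a :: u) (b :: v) = if a = b then a :: lcp u v else [] := rfl

theorem prefix_lcp_iff {z x y : List α} : z <+: lcp x y ↔ z <+: x ∧ z <+: y := by
  induction x generalizing y z with
  | nil => simp +contextual [prefix_nil]
  | cons a u ih =>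
    cases y with
    | nil => simp +contextual [prefix_nil]
    | cons b v =>
      cases z with
      | nil => simp
      | cons c z =>
        rw [lcp_cons_cons]
        split_ifs with hab
        · subst hab; simp only [cons_prefix_cons, ih]; tauto
        · simp only [cons_prefix_cons, prefix_nil, reduceCtorEq, false_iff]
          rintro ⟨⟨rfl, -⟩, rfl, -⟩; exact hab rfl

theorem lcp_prefix_left_s18 (x y : List α) : lcp x y <+: x := (prefix_lcp_iff.1 prefix_rfl).1

theorem lcp_prefix_right_s18 (x y : List α) : lcp x y <+: y := (prefix_lcp_iff.1 prefix_rfl).2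

theorem List.IsPrefix.antisymm {β : Type*} {l₁ l₂ : List β} (h₁ : l₁ <+: l₂) (h₂ : l₂ <+: l₁) :
    l₁ = l₂ :=
  h₁.eq_of_length (h₁.length_le.antisymm h₂.length_le)

theorem lcp_comm (x y : List α) : lcp x y = lcp y x :=
  (prefix_lcp_iff.2 ⟨lcp_prefix_right_s18 x y, lcp_prefix_left_s18 x y⟩).antisymm
    (prefix_lcp_iff.2 ⟨lcp_prefix_right_s18 y x, lcp_prefix_left_s18 y x⟩)

theorem lcp_self (x : List α) : lcp x x = x :=
  (lcp_prefix_left_s18 x x).antisymm (prefix_lcp_iff.2 ⟨prefix_rfl, prefix_rfl⟩)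

theorem lcp_append_left (p x y : List α) : lcp (p ++ x) (p ++ y) = p ++ lcp x y := by
  induction p with
  | nil => rfl
  | cons a p ih => simp [lcp_cons_cons, ih]

theorem lcp_eq_of_prefix {x a b : List α} (hab : a <+: b) (hx : x.length ≤ a.length) :
    lcp x a = lcp x b :=
  (prefix_lcp_iff.2 ⟨lcp_prefix_left_s18 x a, (lcp_prefix_right_s18 x a).trans hab⟩).antisymm
    (prefix_lcp_iff.2 ⟨lcp_prefix_left_s18 x b, prefix_of_prefix_length_le (lcp_prefix_right_s18 x b) hab
      ((lcp_prefix_left_s18 x b).length_le.trans hx)⟩)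

theorem lcp_prefix_of_length_le {x y z : List α}
    (h : (lcp x y).length ≤ (lcp y z).length) : lcp x y <+: lcp x z :=
  prefix_lcp_iff.2 ⟨lcp_prefix_left_s18 x y, (prefix_of_prefix_length_le (lcp_prefix_right_s18 x y)
    (lcp_prefix_left_s18 y z) h).trans (lcp_prefix_right_s18 y z)⟩

theorem min_length_lcp_le (x y z : List α) :
    min (lcp x y).length (lcp y z).length ≤ (lcp x z).length := by
  rcases le_total (lcp x y).length (lcp y z).length with h | h
  · exact (min_le_left _ _).trans (lcp_prefix_of_length_le h).length_le
  · have := (lcp_prefix_of_length_le (x := z) (z := x)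
      (by rwa [lcp_comm z y, lcp_comm y x])).length_le
    rw [lcp_comm z y, lcp_comm z x] at this
    omega

theorem lcp_eq_of_length_lt {x y z : List α} (h : (lcp x y).length < (lcp y z).length) :
    lcp x z = lcp x y := by
  have hp := lcp_prefix_of_length_le h.le
  refine (hp.eq_of_length ?_).symm
  have := min_length_lcp_le x z y
  rw [lcp_comm z y] at this
  have := hp.length_le
  omega

theorem min_length_lcp_le_of_length_le {x y z : List α}
    (h : (lcp x y).length ≤ (lcp x z).length) (Ω : List α) :
    min (lcp x Ω).length (lcp y Ω).length ≤ (lcp z Ω).length := by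
  have hz := min_length_lcp_le z x Ω
  have hy := min_length_lcp_le x Ω y
  rw [lcp_comm z x] at hz
  rw [lcp_comm Ω y] at hy
  omega

theorem lcp_length_lt_min_cases {x y z w : List α} (Ω : List α)
    (h : (lcp x w).length < min (lcp x y).length (lcp x z).length) :
    ((lcp y Ω).length = (lcp x Ω).length ∧ (lcp z Ω).length = (lcp x Ω).length) ∨
      ((lcp w Ω).length < (lcp y Ω).length ∧ (lcp w Ω).length < (lcp z Ω).length) := by
  rcases le_or_gt (lcp x Ω).length (lcp x w).length with hΩ | hΩ
  · left
    have isosceles : ∀ v, (lcp x Ω).length < (lcp x v).length → lcp v Ω = lcp x Ω := fun v hv ↦ by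
      rw [lcp_comm v, lcp_comm x]
      exact lcp_eq_of_length_lt (by rwa [lcp_comm])
    rw [isosceles y (by omega), isosceles z (by omega)]
    exact ⟨rfl, rfl⟩
  · right
    have hw : lcp w Ω = lcp w x := lcp_eq_of_length_lt (by rwa [lcp_comm w])
    have hy := min_length_lcp_le y x Ω
    have hz := min_length_lcp_le z x Ω
    rw [hw, lcp_comm w]
    rw [lcp_comm y] at hy
    rw [lcp_comm z] at hz
    omega

theorem wpow_succ {β : Type*} (x : List β) (n : ℕ) : wpow x (n + 1) = x ++ wpow x n := rfl

theorem wpow_one {β : Type*} (x : List β) : wpow x 1 = x := by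
  simp [wpow]

theorem wpow_add {β : Type*} (x : List β) (m n : ℕ) : wpow x (m + n) = wpow x m ++ wpow x n := by
  simp only [wpow, replicate_add, flatten_append]

theorem length_wpow {β : Type*} (x : List β) (n : ℕ) : (wpow x n).length = n * x.length := by
  simp [wpow]

theorem reverse_wpow {β : Type*} (x : List β) (n : ℕ) : (wpow x n).reverse = wpow x.reverse n := by
  simp [wpow, reverse_flatten]

theorem lcp_wpow_append_self (S U : List α) {m : ℕ} (hm : 1 ≤ m) :
    lcp U (wpow S m ++ U) = lcp U (S ++ U) := by
  rcases eq_or_ne S [] with rfl | hS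
  · simp [wpow]
  induction m, hm using Nat.le_induction with
  | base => rw [wpow_one]
  | succ m _ ih =>
    rw [wpow_succ, append_assoc]
    refine lcp_eq_of_length_lt ?_
    rw [lcp_append_left, length_append, ih]
    have := length_pos_iff.2 hS
    omega

theorem lcp_wpow_append_eq (W S U : List α) {i j k : ℕ} (hj : i < j) (hk : i < k) :
    lcp (W ++ (wpow S i ++ U)) (W ++ (wpow S j ++ U)) =
      lcp (W ++ (wpow S i ++ U)) (W ++ (wpow S k ++ U)) := by
  rw [show j = i + (j - i) by omega, show k = i + (k - i) by omega]
  simp only [wpow_add, append_assoc, lcp_append_left]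
  rw [lcp_wpow_append_self S U (by omega), lcp_wpow_append_self S U (by omega)]

theorem min_length_lcp_wpow_le (W S U Ω : List α) {i j k : ℕ} (hij : i < j) (hjk : j < k) :
    min (lcp (W ++ (wpow S i ++ U)) Ω).length (lcp (W ++ (wpow S j ++ U)) Ω).length ≤
      (lcp (W ++ (wpow S k ++ U)) Ω).length :=
  min_length_lcp_le_of_length_le (by rw [lcp_wpow_append_eq W S U hij (hij.trans hjk)]) Ω

theorem length_lcp_wpow_append_wpow (T x : List α) {j N : ℕ} (hT : T ≠ [])
    (hN : j + x.length ≤ N) :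
    (lcp (wpow T j ++ x) (wpow T N)).length = j * T.length + (lcp x (wpow T N)).length := by
  obtain ⟨n, rfl⟩ := Nat.exists_eq_add_of_le (Nat.le_of_add_right_le hN)
  have hx : x.length ≤ (wpow T n).length := by
    rw [length_wpow]
    nlinarith [length_pos_iff.2 hT]
  have hsplit : lcp (wpow T j ++ x) (wpow T (j + n)) = wpow T j ++ lcp x (wpow T n) := by
    rw [wpow_add, lcp_append_left]
  have hstab : lcp x (wpow T n) = lcp x (wpow T (j + n)) :=
    lcp_eq_of_prefix (by rw [add_comm, wpow_add]; exact prefix_append _ _) hx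
  rw [hsplit, length_append, hstab, length_wpow]

def pump (T W S U : List α) (k : ℕ) : List α := wpow T k ++ (W ++ (wpow S k ++ U))

theorem min_length_lcp_pump_le (T W S U : List α) (k : ℕ) :
    min (lcp (pump T W S U 0) (pump T W S U 1)).length
        (lcp (pump T W S U 0) (pump T W S U 2)).length ≤
      (lcp (pump T W S U 0) (pump T W S U k)).length := by
  rcases le_or_gt k 2 with hk | hk
  · interval_cases k
    · rw [lcp_self]; exact (min_le_left _ _).trans (lcp_prefix_left_s18 _ _).length_le
    · exact min_le_left _ _
    · exact min_le_right _ _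
  rcases eq_or_ne T [] with rfl | hT
  · have hpump : ∀ j, pump [] W S U j = W ++ (wpow S j ++ U) := fun j ↦ by simp [pump, wpow]
    simp only [hpump, lcp_comm (W ++ (wpow S 0 ++ U))]
    exact min_length_lcp_wpow_le W S U _ one_lt_two hk
  by_contra! hlt
  set N := k + (W ++ (wpow S k ++ U)).length
  have hshift : ∀ j ≤ k, (lcp (pump T W S U j) (wpow T N)).length =
      j * T.length + (lcp (W ++ (wpow S j ++ U)) (wpow T N)).length := fun j hj ↦ by
    refine length_lcp_wpow_append_wpow T _ hT ?_
    simp only [N, length_append, length_wpow]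
    nlinarith
  have h012 := min_length_lcp_wpow_le W S U (wpow T N) zero_lt_one one_lt_two
  have h12k := min_length_lcp_wpow_le W S U (wpow T N) one_lt_two hk
  have g0 := hshift 0 (by omega)
  have g1 := hshift 1 (by omega)
  have g2 := hshift 2 hk.le
  have gk := hshift k le_rfl
  have hT2k : 2 * T.length ≤ k * T.length := Nat.mul_le_mul_right _ hk.le
  have := length_pos_iff.2 hT
  rcases lcp_length_lt_min_cases (wpow T N) hlt with ⟨h1, h2⟩ | ⟨h1, h2⟩ <;> omega

theorem lcp_lcp_prefix_of_min_le {x y z w : List α}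
    (h : min (lcp x y).length (lcp x z).length ≤ (lcp x w).length) : lcp (lcp x y) z <+: w := by
  have hx : lcp (lcp x y) z <+: x := (lcp_prefix_left_s18 _ _).trans (lcp_prefix_left_s18 _ _)
  have hlen : (lcp (lcp x y) z).length ≤ (lcp x w).length :=
    le_trans (le_min (lcp_prefix_left_s18 _ _).length_le
      (prefix_lcp_iff.2 ⟨hx, lcp_prefix_right_s18 _ _⟩).length_le) h
  exact (prefix_of_prefix_length_le hx (lcp_prefix_left_s18 x w) hlen).trans (lcp_prefix_right_s18 x w)

theorem lcs_pumping_general (u s w t : List α) :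
    IsLCS {x | ∃ k, x = u ++ wpow s k ++ w ++ wpow t k}
      (lcs (lcs (u ++ w) (u ++ s ++ w ++ t)) (u ++ s ++ s ++ w ++ t ++ t)) := by
  set Y := pump t.reverse w.reverse s.reverse u.reverse
  have hrev : ∀ k, (u ++ wpow s k ++ w ++ wpow t k).reverse = Y k := fun k ↦ by
    simp [Y, pump, reverse_wpow]
  have hR : (lcs (lcs (u ++ w) (u ++ s ++ w ++ t)) (u ++ s ++ s ++ w ++ t ++ t)).reverse =
      lcp (lcp (Y 0) (Y 1)) (Y 2) := by
    rw [← hrev, ← hrev, ← hrev]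
    simp [lcs, wpow, replicate_succ]
  refine ⟨?_, fun z hz ↦ ?_⟩
  · rintro _ ⟨k, rfl⟩
    rw [← reverse_prefix, hR, hrev]
    exact lcp_lcp_prefix_of_min_le (min_length_lcp_pump_le _ _ _ _ k)
  · have hzY : ∀ k, z.reverse <+: Y k := fun k ↦ hrev k ▸ reverse_prefix.2 (hz _ ⟨k, rfl⟩)
    rw [← reverse_prefix, hR]
    exact prefix_lcp_iff.2 ⟨prefix_lcp_iff.2 ⟨hzY 0, hzY 1⟩, hzY 2⟩

theorem lcs_pumping (u s w t : List α) (h : s ++ t ≠ t ++ s) :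
    IsLCS {x | ∃ k, x = u ++ wpow s k ++ w ++ wpow t k}
      (lcs (lcs (u ++ w) (u ++ s ++ w ++ t)) (u ++ s ++ s ++ w ++ t ++ t)) :=
  lcs_pumping_general u s w t
end
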